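/- If u and v are two linearly independent solutions of the linear ODE x'' + Ω²(t) x = 0 with constant Wronskian W = u v' − v u' ≠ 0, and a, b, c are real constants with a c − b² = 1/W² and a, c > 0, then ρ(t) = √(a u(t)² + c v(t)² + 2 b u(t) v(t)) solves the Ermakov–Pinney equation ρ'' + Ω²(t) ρ = 1/ρ³ on any interval where a u² + c v² + 2 b u v > 0. -/

import Mathlib

/-!
With `B = symBilin a b c` the symmetric bilinear form of matrix `[[a, b], [b, c]]` and
`x = (u, v)`, the function `Q = B(x, x)` satisfies `Q' = 2 B(x, x')` and, since
`x'' = -Ω² x`, `Q'' = 2 B(x', x') - 2 Ω² Q`. For `ρ = √Q` one has `4 ρ³ ρ'' = 2 Q Q'' - Q'²`,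
hence `4 ρ³ (ρ'' + Ω² ρ) = 4 (B(x, x) B(x', x') - B(x, x')²) = 4 (a c - b²) W² = 4`
by the Lagrange identity for `B`.
-/

open Filter Topology

def symBilin (a b c x₁ x₂ y₁ y₂ : ℝ) : ℝ :=
  a * (x₁ * y₁) + c * (x₂ * y₂) + b * (x₁ * y₂ + x₂ * y₁)

section symBilin

variable (a b c : ℝ)

theorem symBilin_comm (x₁ x₂ y₁ y₂ : ℝ) :
    symBilin a b c x₁ x₂ y₁ y₂ = symBilin a b c y₁ y₂ x₁ x₂ := by
  unfold symBilin; ring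

theorem symBilin_self (x₁ x₂ : ℝ) :
    symBilin a b c x₁ x₂ x₁ x₂ = a * x₁ ^ 2 + c * x₂ ^ 2 + 2 * b * x₁ * x₂ := by
  unfold symBilin; ring

theorem symBilin_smul_right (x₁ x₂ y₁ y₂ r : ℝ) :
    symBilin a b c x₁ x₂ (r * y₁) (r * y₂) = r * symBilin a b c x₁ x₂ y₁ y₂ := by
  unfold symBilin; ring

theorem symBilin_self_mul_self_sub_sq (x₁ x₂ y₁ y₂ : ℝ) :
    symBilin a b c x₁ x₂ x₁ x₂ * symBilin a b c y₁ y₂ y₁ y₂ - symBilin a b c x₁ x₂ y₁ y₂ ^ 2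
      = (a * c - b ^ 2) * (x₁ * y₂ - x₂ * y₁) ^ 2 := by
  unfold symBilin; ring

theorem HasDerivAt.symBilin {x₁ x₂ y₁ y₂ : ℝ → ℝ} {x₁' x₂' y₁' y₂' t : ℝ}
    (hx₁ : HasDerivAt x₁ x₁' t) (hx₂ : HasDerivAt x₂ x₂' t)
    (hy₁ : HasDerivAt y₁ y₁' t) (hy₂ : HasDerivAt y₂ y₂' t) :
    HasDerivAt (fun s => _root_.symBilin a b c (x₁ s) (x₂ s) (y₁ s) (y₂ s))
      (_root_.symBilin a b c x₁' x₂' (y₁ t) (y₂ t)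
        + _root_.symBilin a b c (x₁ t) (x₂ t) y₁' y₂') t := by
  have h := (((hx₁.fun_mul hy₁).const_mul a).fun_add ((hx₂.fun_mul hy₂).const_mul c)).fun_add
    (((hx₁.fun_mul hy₂).fun_add (hx₂.fun_mul hy₁)).const_mul b)
  exact h.congr_deriv (by unfold _root_.symBilin; ring)

end symBilin

theorem hasDerivAt_deriv_sqrt {f f' : ℝ → ℝ} {f'' t : ℝ}
    (hf : ∀ᶠ x in 𝓝 t, HasDerivAt f (f' x) x) (hf' : HasDerivAt f' f'' t) (ht : 0 < f t) :
    HasDerivAt (deriv fun x => √(f x)) ((2 * f t * f'' - f' t ^ 2) / (4 * √(f t) ^ 3)) t := by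
  have hne : ∀ᶠ x in 𝓝 t, f x ≠ 0 :=
    hf.self_of_nhds.continuousAt.eventually_ne ht.ne'
  have hderiv : deriv (fun x => √(f x)) =ᶠ[𝓝 t] fun x => f' x / (2 * √(f x)) := by
    filter_upwards [hf, hne] with x hx hx0
    exact (hx.sqrt hx0).deriv
  have hsqrt : 0 < √(f t) := Real.sqrt_pos.mpr ht
  have h := hf'.div ((hf.self_of_nhds.sqrt ht.ne').const_mul 2) (by positivity)
  refine (h.congr_of_eventuallyEq hderiv).congr_deriv ?_
  field_simp
  rw [Real.sq_sqrt ht.le]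
  ring

theorem stmt9_general (Ω2 u v u' v' u'' v'' : ℝ → ℝ) (W a b c : ℝ)
    (hu1 : ∀ t, HasDerivAt u (u' t) t) (hu2 : ∀ t, HasDerivAt u' (u'' t) t)
    (hv1 : ∀ t, HasDerivAt v (v' t) t) (hv2 : ∀ t, HasDerivAt v' (v'' t) t)
    (hueq : ∀ t, u'' t + Ω2 t * u t = 0)
    (hveq : ∀ t, v'' t + Ω2 t * v t = 0)
    (hW : ∀ t, u t * v' t - v t * u' t = W) (hW0 : W ≠ 0)
    (habc : a * c - b ^ 2 = 1 / W ^ 2)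
    (s : Set ℝ)
    (hpos : ∀ t ∈ s, 0 < a * u t ^ 2 + c * v t ^ 2 + 2 * b * u t * v t) :
    ∀ t ∈ s,
      deriv (deriv (fun t =>
          Real.sqrt (a * u t ^ 2 + c * v t ^ 2 + 2 * b * u t * v t))) t
        + Ω2 t * Real.sqrt (a * u t ^ 2 + c * v t ^ 2 + 2 * b * u t * v t)
        = 1 / (Real.sqrt (a * u t ^ 2 + c * v t ^ 2 + 2 * b * u t * v t)) ^ 3 := by
  intro t ht
  simp only [← symBilin_self] at hpos ⊢
  have hQ : ∀ x, HasDerivAt (fun x => symBilin a b c (u x) (v x) (u x) (v x))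
      (2 * symBilin a b c (u x) (v x) (u' x) (v' x)) x := fun x => by
    refine ((hu1 x).symBilin a b c (hv1 x) (hu1 x) (hv1 x)).congr_deriv ?_
    rw [symBilin_comm a b c (u' x)]; ring
  have hQ' : HasDerivAt (fun x => 2 * symBilin a b c (u x) (v x) (u' x) (v' x))
      (2 * (symBilin a b c (u' t) (v' t) (u' t) (v' t)
        - Ω2 t * symBilin a b c (u t) (v t) (u t) (v t))) t := by
    refine (((hu1 t).symBilin a b c (hv1 t) (hu2 t) (hv2 t)).const_mul 2).congr_deriv ?_
    rw [eq_neg_of_add_eq_zero_left (hueq t), eq_neg_of_add_eq_zero_left (hveq t),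
      ← neg_mul, ← neg_mul, symBilin_smul_right]
    ring
  have hLagrange : symBilin a b c (u t) (v t) (u t) (v t) * symBilin a b c (u' t) (v' t) (u' t) (v' t)
      - symBilin a b c (u t) (v t) (u' t) (v' t) ^ 2 = 1 := by
    rw [symBilin_self_mul_self_sub_sq, hW t, habc]
    field_simp
  rw [(hasDerivAt_deriv_sqrt (.of_forall hQ) hQ' (hpos t ht)).deriv]
  set Q := symBilin a b c (u t) (v t) (u t) (v t)
  set ρ := √Q
  have hρ : 0 < ρ := Real.sqrt_pos.mpr (hpos t ht)
  have hρsq : ρ ^ 2 = Q := Real.sq_sqrt (hpos t ht).le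
  rw [← hρsq] at hLagrange ⊢
  field_simp
  linear_combination 4 * hLagrange

/-- If `u, v` are linearly independent solutions of `x'' + Ω²(t) x = 0` with
constant nonzero Wronskian `W = u v' - v u'`, and `a c - b² = 1/W²` with
`a, c > 0`, then `ρ = √(a u² + c v² + 2 b u v)` solves the Ermakov–Pinney
equation `ρ'' + Ω² ρ = 1/ρ³` on any open set where `a u² + c v² + 2buv > 0`. -/
theorem stmt9 (Ω2 u v u' v' u'' v'' : ℝ → ℝ) (W a b c : ℝ)
    (hΩcont : Continuous Ω2)
    (hu1 : ∀ t, HasDerivAt u (u' t) t) (hu2 : ∀ t, HasDerivAt u' (u'' t) t)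
    (hv1 : ∀ t, HasDerivAt v (v' t) t) (hv2 : ∀ t, HasDerivAt v' (v'' t) t)
    (hueq : ∀ t, u'' t + Ω2 t * u t = 0)
    (hveq : ∀ t, v'' t + Ω2 t * v t = 0)
    (hW : ∀ t, u t * v' t - v t * u' t = W) (hW0 : W ≠ 0)
    (habc : a * c - b ^ 2 = 1 / W ^ 2) (hapos : 0 < a) (hcpos : 0 < c)
    (s : Set ℝ) (hs : IsOpen s)
    (hpos : ∀ t ∈ s, 0 < a * u t ^ 2 + c * v t ^ 2 + 2 * b * u t * v t) :
    ∀ t ∈ s,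
      deriv (deriv (fun t =>
          Real.sqrt (a * u t ^ 2 + c * v t ^ 2 + 2 * b * u t * v t))) t
        + Ω2 t * Real.sqrt (a * u t ^ 2 + c * v t ^ 2 + 2 * b * u t * v t)
        = 1 / (Real.sqrt (a * u t ^ 2 + c * v t ^ 2 + 2 * b * u t * v t)) ^ 3 :=
  stmt9_general Ω2 u v u' v' u'' v'' W a b c hu1 hu2 hv1 hv2 hueq hveq hW hW0 habc s hpos
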